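/- Let R be a commutative ring with commuting derivations D₁,…,D_n, and define the Euler–Lagrange operator on a 'Lagrangian' f ∈ R depending on variables u_α (α a multi-index, |α| ≤ s) by E(f) = Σ_{|α| ≤ s} (−1)^{|α|} D_α(∂f/∂u_α). Then E annihilates total divergences: for any g₁,…,g_n ∈ R (depending on u_α with |α| ≤ s−1), E(Σ_i D_i g_i) = 0, in the formal setting where ∂/∂u_α and D_i satisfy the commutation rule [∂/∂u_α, D_i] = ∂/∂u_{α−i} (interpreted as 0 when α_i = 0). -/
import Mathlib


/-- The iterated "total derivative" operator `D_α = D₁^{α₁} ∘ ⋯ ∘ D_n^{α_n}` attached to a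
multi-index `α ∈ ℕ^n`. -/
def multiD {R : Type*} {n : ℕ} (D : Fin n → R → R) (α : Fin n → ℕ) : R → R :=
  (List.ofFn fun i => (D i)^[α i]).foldr (· ∘ ·) id

section Aux

variable {R : Type*} [CommRing R] {n : ℕ}

lemma foldr_comp_comm (c : R → R) (l : List (R → R)) (h : ∀ g ∈ l, c ∘ g = g ∘ c) :
    c ∘ l.foldr (· ∘ ·) id = l.foldr (· ∘ ·) id ∘ c := by
  induction l with
  | nil => rfl
  | cons a l ih =>
    simp only [List.foldr_cons]
    have ha := h a (by simp)
    have ih' := ih (fun g hg => h g (by simp [hg]))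
    calc c ∘ (a ∘ l.foldr (· ∘ ·) id) = (c ∘ a) ∘ l.foldr (· ∘ ·) id := rfl
      _ = (a ∘ c) ∘ l.foldr (· ∘ ·) id := by rw [ha]
      _ = a ∘ (c ∘ l.foldr (· ∘ ·) id) := rfl
      _ = a ∘ (l.foldr (· ∘ ·) id ∘ c) := by rw [ih']
      _ = (a ∘ l.foldr (· ∘ ·) id) ∘ c := rfl

lemma comm_iterate (c f : R → R) (h : c ∘ f = f ∘ c) (k : ℕ) :
    c ∘ f^[k] = f^[k] ∘ c := by
  have hc : Function.Commute c f := fun x => congrFun h x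
  exact funext fun x => (hc.iterate_right k) x

lemma comm_multiD (c : R → R) (D : Fin n → R → R) (α : Fin n → ℕ)
    (h : ∀ j, c ∘ D j = D j ∘ c) :
    c ∘ multiD D α = multiD D α ∘ c := by
  apply foldr_comp_comm
  intro g hg
  rw [List.mem_ofFn] at hg
  obtain ⟨j, rfl⟩ := hg
  exact comm_iterate c (D j) (h j) (α j)

lemma multiD_cons (D : Fin (n + 1) → R → R) (α : Fin (n + 1) → ℕ) :
    multiD D α = (D 0)^[α 0] ∘ multiD (fun j => D j.succ) (fun j => α j.succ) := by
  unfold multiD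
  rw [List.ofFn_succ]
  rfl

lemma multiD_succ_idx (D : Fin n → R → R)
    (hcomm : ∀ i j, D i ∘ D j = D j ∘ D i) (α : Fin n → ℕ) (i : Fin n) :
    multiD D (α + fun j => if j = i then 1 else 0) = multiD D α ∘ D i := by
  induction n with
  | zero => exact i.elim0
  | succ m ih =>
    rw [multiD_cons, multiD_cons]
    cases i using Fin.cases with
    | zero =>
      have h0 : ((α + fun j => if j = (0 : Fin (m + 1)) then 1 else 0 : Fin (m+1) → ℕ)) 0 = α 0 + 1 := by
        simp [Pi.add_apply]
      have htail : (fun j : Fin m =>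
          ((α + fun j => if j = (0 : Fin (m + 1)) then 1 else 0 : Fin (m+1) → ℕ)) j.succ) =
          fun j : Fin m => α j.succ := by
        funext j
        simp [Pi.add_apply, Fin.succ_ne_zero]
      rw [h0, htail, Function.iterate_succ]
      have hc : D 0 ∘ multiD (fun j : Fin m => D j.succ) (fun j : Fin m => α j.succ) =
          multiD (fun j : Fin m => D j.succ) (fun j : Fin m => α j.succ) ∘ D 0 :=
        comm_multiD _ _ _ (fun j => hcomm 0 j.succ)
      calc ((D 0)^[α 0] ∘ D 0) ∘ multiD (fun j : Fin m => D j.succ) (fun j : Fin m => α j.succ)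
          = (D 0)^[α 0] ∘ (D 0 ∘ multiD (fun j : Fin m => D j.succ) (fun j : Fin m => α j.succ)) := rfl
        _ = (D 0)^[α 0] ∘ (multiD (fun j : Fin m => D j.succ) (fun j : Fin m => α j.succ) ∘ D 0) := by
            rw [hc]
        _ = ((D 0)^[α 0] ∘ multiD (fun j : Fin m => D j.succ) (fun j : Fin m => α j.succ)) ∘ D 0 := rfl
    | succ k =>
      have h0 : ((α + fun j => if j = k.succ then 1 else 0 : Fin (m+1) → ℕ)) 0 = α 0 := by
        simp [Pi.add_apply, (Fin.succ_ne_zero k).symm]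
      have htail : (fun j : Fin m => ((α + fun j => if j = k.succ then 1 else 0 : Fin (m+1) → ℕ)) j.succ) =
          ((fun j : Fin m => α j.succ) + fun j : Fin m => if j = k then 1 else 0) := by
        funext j
        simp [Pi.add_apply, Fin.succ_inj]
      rw [h0, htail, ih (fun j : Fin m => D j.succ) (fun a b => hcomm a.succ b.succ)
        (fun j : Fin m => α j.succ) k]
      rfl

lemma iterate_map_add' (f : R → R) (hf : ∀ a b : R, f (a + b) = f a + f b) (k : ℕ) :
    ∀ a b : R, f^[k] (a + b) = f^[k] a + f^[k] b := by
  induction k with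
  | zero => intro a b; simp
  | succ m ih =>
    intro a b
    rw [Function.iterate_succ_apply, hf, ih, Function.iterate_succ_apply,
      Function.iterate_succ_apply]

lemma foldr_map_add (l : List (R → R)) (h : ∀ g ∈ l, ∀ a b : R, g (a + b) = g a + g b) :
    ∀ a b : R, l.foldr (· ∘ ·) id (a + b) = l.foldr (· ∘ ·) id a + l.foldr (· ∘ ·) id b := by
  induction l with
  | nil => intro a b; rfl
  | cons c l ih =>
    intro a b
    have ih' := ih (fun g hg => h g (by simp [hg]))
    simp only [List.foldr_cons, Function.comp_apply]
    rw [ih', h c (by simp)]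

lemma multiD_map_add (D : Fin n → R → R) (hadd : ∀ i (a b : R), D i (a + b) = D i a + D i b)
    (α : Fin n → ℕ) (a b : R) :
    multiD D α (a + b) = multiD D α a + multiD D α b := by
  apply foldr_map_add
  intro g hg
  rw [List.mem_ofFn] at hg
  obtain ⟨j, rfl⟩ := hg
  exact iterate_map_add' (D j) (hadd j) (α j)

lemma multiD_map_zero (D : Fin n → R → R) (hadd : ∀ i (a b : R), D i (a + b) = D i a + D i b)
    (α : Fin n → ℕ) : multiD D α 0 = 0 := by
  have h := multiD_map_add D hadd α 0 0
  rw [add_zero] at h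
  exact (left_eq_add.mp h)

end Aux

/-- The Euler–Lagrange operator `E(f) = Σ_{|α| ≤ s} (−1)^{|α|} D_α (∂f/∂u_α)` annihilates
total divergences: in the formal setting of commuting total derivatives `Dᵢ` and partial
operators `P α = ∂/∂u_α` satisfying the commutation rule
`[∂/∂u_α, D_i] = ∂/∂u_{α−eᵢ}` (zero when `αᵢ = 0`), one has `E(Dᵢ g) = 0` for every `g`
of order `≤ s − 1` (i.e. `∂g/∂u_α = 0` whenever `|α| ≥ s`). -/
theorem euler_lagrange_annihilates_total_divergence
    {R : Type*} [CommRing R] {n : ℕ} (D : Fin n → R → R)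
    (hadd : ∀ i (a b : R), D i (a + b) = D i a + D i b)
    (hleib : ∀ i (a b : R), D i (a * b) = D i a * b + a * D i b)
    (hcomm : ∀ i j, D i ∘ D j = D j ∘ D i)
    (P : (Fin n → ℕ) → R → R)
    (hP : ∀ (α : Fin n → ℕ) (i : Fin n) (f : R),
      P α (D i f) =
        D i (P α f) +
          (if α i = 0 then 0 else P (α - fun j => if j = i then 1 else 0) f))
    (s : ℕ) (g : R) (i : Fin n)
    (hg : ∀ α : Fin n → ℕ, s ≤ ∑ j, α j → P α g = 0) :
    ∑ α ∈ (Finset.Icc (0 : Fin n → ℕ) fun _ => s).filter (fun α => ∑ j, α j ≤ s),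
      (-1 : ℤ) ^ (∑ j, α j) • multiD D α (P α (D i g)) = 0 := by
  classical
  set e : Fin n → ℕ := fun j => if j = i then 1 else 0 with he
  have hDzero : D i 0 = 0 := by
    have h := hadd i 0 0
    rw [add_zero] at h
    exact (left_eq_add.mp h)
  have hsum_e : ∑ j, e j = 1 := by simp [he]
  set T : Finset (Fin n → ℕ) :=
    (Finset.Icc (0 : Fin n → ℕ) fun _ => s).filter (fun α => ∑ j, α j ≤ s) with hT
  set T1 : Finset (Fin n → ℕ) :=
    (Finset.Icc (0 : Fin n → ℕ) fun _ => s).filter (fun α => ∑ j, α j + 1 ≤ s) with hT1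
  have hT1subT : T1 ⊆ T := by
    intro α hα
    rw [hT1, Finset.mem_filter] at hα
    rw [hT, Finset.mem_filter]
    exact ⟨hα.1, le_trans (Nat.le_succ _) hα.2⟩
  -- split each term using hP
  have hsplit : ∑ α ∈ T, (-1 : ℤ) ^ (∑ j, α j) • multiD D α (P α (D i g)) =
      (∑ α ∈ T, (-1 : ℤ) ^ (∑ j, α j) • multiD D α (D i (P α g))) +
      ∑ α ∈ T, (-1 : ℤ) ^ (∑ j, α j) •
        multiD D α (if α i = 0 then 0 else P (α - e) g) := by
    rw [← Finset.sum_add_distrib]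
    apply Finset.sum_congr rfl
    intro α _
    rw [hP α i g, multiD_map_add D hadd, smul_add]
  rw [hsplit]
  -- First sum restricts to T1
  have hA : ∑ α ∈ T, (-1 : ℤ) ^ (∑ j, α j) • multiD D α (D i (P α g)) =
      ∑ α ∈ T1, (-1 : ℤ) ^ (∑ j, α j) • multiD D α (D i (P α g)) := by
    symm
    apply Finset.sum_subset hT1subT
    intro α hαT hαT1
    rw [hT1, Finset.mem_filter] at hαT1
    rw [hT, Finset.mem_filter] at hαT
    have hs : s ≤ ∑ j, α j := by
      by_contra hlt
      push_neg at hlt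
      exact hαT1 ⟨hαT.1, hlt⟩
    rw [hg α hs, hDzero, multiD_map_zero D hadd, smul_zero]
  -- Second sum restricts to indices with α i ≠ 0
  have hB : ∑ α ∈ T, (-1 : ℤ) ^ (∑ j, α j) •
        multiD D α (if α i = 0 then 0 else P (α - e) g) =
      ∑ α ∈ T.filter (fun α => α i ≠ 0),
        (-1 : ℤ) ^ (∑ j, α j) • multiD D α (P (α - e) g) := by
    rw [← Finset.sum_filter_of_ne (p := fun α => α i ≠ 0)]
    · apply Finset.sum_congr rfl
      intro α hα
      rw [Finset.mem_filter] at hα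
      rw [if_neg hα.2]
    · intro α _ hne hzero
      apply hne
      rw [if_pos hzero, multiD_map_zero D hadd, smul_zero]
  rw [hA, hB]
  -- reindex the second sum via β ↦ β + e
  have hreindex : ∑ α ∈ T.filter (fun α => α i ≠ 0),
        (-1 : ℤ) ^ (∑ j, α j) • multiD D α (P (α - e) g) =
      ∑ β ∈ T1, (-1 : ℤ) ^ (∑ j, β j + 1) • multiD D (β + e) (P β g) := by
    symm
    apply Finset.sum_nbij' (i := fun β => β + e) (j := fun α => α - e)
    · -- maps T1 into the filtered set
      intro β hβ
      rw [hT1, Finset.mem_filter, Finset.mem_Icc] at hβ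
      obtain ⟨⟨hβ0, hβs⟩, hβsum⟩ := hβ
      have hβi : β i + 1 ≤ s := by
        have : β i ≤ ∑ j, β j := Finset.single_le_sum (f := fun j => β j)
          (fun j _ => Nat.zero_le _) (Finset.mem_univ i)
        omega
      rw [Finset.mem_filter, hT, Finset.mem_filter, Finset.mem_Icc]
      refine ⟨⟨⟨by intro j; exact Nat.zero_le _, ?_⟩, ?_⟩, ?_⟩
      · intro j
        by_cases hj : j = i
        · subst hj; simpa [he] using hβi
        · simpa [he, hj] using hβs j
      · have hrw : ∑ j, (β + e) j = ∑ j, β j + 1 := by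
          calc ∑ j, (β + e) j = ∑ j, (β j + e j) := rfl
            _ = (∑ j, β j) + ∑ j, e j := Finset.sum_add_distrib
            _ = ∑ j, β j + 1 := by rw [hsum_e]
        omega
      · simp [he, Pi.add_apply]
    · -- maps filtered set into T1
      intro α hα
      rw [Finset.mem_filter, hT, Finset.mem_filter, Finset.mem_Icc] at hα
      obtain ⟨⟨⟨hα0, hαs⟩, hαsum⟩, hαi⟩ := hα
      have hei : ∀ j, e j ≤ α j := by
        intro j
        by_cases hj : j = i
        · subst hj; simp [he]; omega
        · simp [he, hj]
      have hsub : ∑ j, (α - e) j + 1 = ∑ j, α j := by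
        have : ∀ j, (α - e) j + e j = α j := fun j => Nat.sub_add_cancel (hei j)
        calc ∑ j, (α - e) j + 1 = ∑ j, (α - e) j + ∑ j, e j := by rw [hsum_e]
          _ = ∑ j, ((α - e) j + e j) := (Finset.sum_add_distrib).symm
          _ = ∑ j, α j := by exact Finset.sum_congr rfl fun j _ => this j
      rw [hT1, Finset.mem_filter, Finset.mem_Icc]
      refine ⟨⟨by intro j; exact Nat.zero_le _, ?_⟩, by omega⟩
      intro j
      exact le_trans (Nat.sub_le _ _) (hαs j)
    · -- left inverse
      intro β _
      funext j
      simp [Pi.add_apply, Pi.sub_apply]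
    · -- right inverse
      intro α hα
      rw [Finset.mem_filter] at hα
      funext j
      have : e j ≤ α j := by
        by_cases hj : j = i
        · subst hj; simp [he]; omega
        · simp [he, hj]
      simp [Pi.add_apply, Pi.sub_apply, Nat.sub_add_cancel this]
    · -- values agree
      intro β hβ
      have h1 : ∑ j, (β + e) j = ∑ j, β j + 1 := by
        calc ∑ j, (β + e) j = ∑ j, (β j + e j) := rfl
          _ = (∑ j, β j) + ∑ j, e j := Finset.sum_add_distrib
          _ = ∑ j, β j + 1 := by rw [hsum_e]
      have h2 : (β + e) - e = β := by
        funext j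
        simp [Pi.add_apply, Pi.sub_apply]
      rw [h1, h2]
  rw [hreindex, ← Finset.sum_add_distrib]
  apply Finset.sum_eq_zero
  intro β _
  have hms : multiD D (β + e) = multiD D β ∘ D i := multiD_succ_idx D hcomm β i
  rw [hms]
  simp only [Function.comp_apply, pow_succ, mul_neg_one, neg_smul]
  exact add_neg_cancel _
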